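/- arXiv:1809.01414 — 9 statements merged into one kernel-verified Lean document; each statement's English description precedes it below -/
import Mathlib

section
/- Let E be an inner product space over ℂ and let μ̄, ∂̄, ∂, μ, μ̄*, ∂̄*, ∂*, μ*, Λ be ℂ-linear endomorphisms of E such that: (adjointness) for all x, y in E one has ⟪μ̄ x, y⟫ = ⟪x, μ̄* y⟫, ⟪∂̄ x, y⟫ = ⟪x, ∂̄* y⟫, ⟪∂ x, y⟫ = ⟪x, ∂* y⟫, ⟪μ x, y⟫ = ⟪x, μ* y⟫; (almost Kähler identities) Λ∘μ̄ − μ̄∘Λ = i·μ*, Λ∘μ − μ∘Λ = −i·μ̄*, Λ∘∂̄ − ∂̄∘Λ = −i·∂*, Λ∘∂ − ∂∘Λ = i·∂̄*; and (d² = 0 relation) μ∘μ̄ + μ̄∘μ + ∂∘∂̄ + ∂̄∘∂ = 0. Writing Δ_δ := δ∘δ* + δ*∘δ for each pair, then for every x ∈ E the following are equivalent: (Δ_∂̄ + Δ_μ) x = 0; (Δ_∂ + Δ_μ̄) x = 0; (Δ_μ̄ + Δ_∂̄ + Δ_∂ + Δ_μ) x = 0; all eight operators μ̄, ∂̄, ∂,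 μ, μ̄*, ∂̄*, ∂*, μ* annihilate x. Moreover any such x satisfies (μ̄ + ∂̄ + ∂ + μ) x = 0 and (μ̄* + ∂̄* + ∂* + μ*) x = 0. -/
/-!
Solving the almost Kähler identities for the adjoints (`μ* = -i[Λ, μ̄]`, `μ̄* = i[Λ, μ]`,
`∂* = i[Λ, ∂̄]`, `∂̄* = -i[Λ, ∂]`) and using that `[Λ, ·]` is a derivation gives
`(Δ_∂̄ + Δ_μ) - (Δ_∂ + Δ_μ̄) = -i[Λ, μμ̄ + μ̄μ + ∂∂̄ + ∂̄∂]`, which vanishes by `d² = 0`.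
On the other hand `⟪(Δ_δ + Δ_ε) x, x⟫ = ‖δ x‖² + ‖δ* x‖² + ‖ε x‖² + ‖ε* x‖²`, so each of the two
equal operators `Δ_∂̄ + Δ_μ` and `Δ_∂ + Δ_μ̄` kills `x` exactly when four of the eight operators do.
-/

open Complex
open scoped InnerProductSpace

def hodgeLaplacian {A : Type*} [Ring A] (δ δs : A) : A := δ * δs + δs * δ

section KahlerIdentities

variable {A : Type*} [Ring A] [Algebra ℂ A] {Λ mb pb p m mbs pbs ps ms : A}

theorem hodgeLaplacian_sub_hodgeLaplacian_eq_commutator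
    (h1 : Λ * mb - mb * Λ = I • ms) (h2 : Λ * m - m * Λ = -(I • mbs))
    (h3 : Λ * pb - pb * Λ = -(I • ps)) (h4 : Λ * p - p * Λ = I • pbs) :
    (hodgeLaplacian pb pbs + hodgeLaplacian m ms) - (hodgeLaplacian p ps + hodgeLaplacian mb mbs) =
      -I • (Λ * (m * mb + mb * m + p * pb + pb * p) - (m * mb + mb * m + p * pb + pb * p) * Λ) := by
  have solve_I : ∀ {a b : A}, a = I • b → b = -I • a := fun h => by
    rw [h, smul_smul, neg_mul, I_mul_I, neg_neg, one_smul]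
  have solve_neg_I : ∀ {a b : A}, a = -(I • b) → b = I • a := fun h => by
    rw [h, smul_neg, smul_smul, I_mul_I, neg_smul, one_smul, neg_neg]
  rw [solve_I h1, solve_neg_I h2, solve_neg_I h3, solve_I h4]
  simp only [hodgeLaplacian]
  noncomm_ring
  match_scalars <;> simp

theorem hodgeLaplacian_add_eq_of_kahler
    (h1 : Λ * mb - mb * Λ = I • ms) (h2 : Λ * m - m * Λ = -(I • mbs))
    (h3 : Λ * pb - pb * Λ = -(I • ps)) (h4 : Λ * p - p * Λ = I • pbs)
    (h5 : m * mb + mb * m + p * pb + pb * p = 0) :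
    hodgeLaplacian pb pbs + hodgeLaplacian m ms = hodgeLaplacian p ps + hodgeLaplacian mb mbs := by
  rw [← sub_eq_zero, hodgeLaplacian_sub_hodgeLaplacian_eq_commutator h1 h2 h3 h4, h5]
  simp

end KahlerIdentities

section Positivity

variable {𝕜 E : Type*} [RCLike 𝕜] [NormedAddCommGroup E] [InnerProductSpace 𝕜 E]
  {f fs g gs : Module.End 𝕜 E}

theorem re_inner_hodgeLaplacian_apply_self (hf : ∀ a b, ⟪f a, b⟫_𝕜 = ⟪a, fs b⟫_𝕜) (x : E) :
    RCLike.re ⟪hodgeLaplacian f fs x, x⟫_𝕜 = ‖fs x‖ ^ 2 + ‖f x‖ ^ 2 := by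
  have hf' : ⟪fs (f x), x⟫_𝕜 = ⟪f x, f x⟫_𝕜 := by
    rw [← inner_conj_symm, ← hf, inner_conj_symm]
  rw [hodgeLaplacian, LinearMap.add_apply, Module.End.mul_apply, Module.End.mul_apply,
    inner_add_left, hf, hf', map_add, inner_self_eq_norm_sq, inner_self_eq_norm_sq]

theorem hodgeLaplacian_add_apply_eq_zero_iff (hf : ∀ a b, ⟪f a, b⟫_𝕜 = ⟪a, fs b⟫_𝕜)
    (hg : ∀ a b, ⟪g a, b⟫_𝕜 = ⟪a, gs b⟫_𝕜) (x : E) :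
    (hodgeLaplacian f fs + hodgeLaplacian g gs) x = 0 ↔
      f x = 0 ∧ fs x = 0 ∧ g x = 0 ∧ gs x = 0 := by
  refine ⟨fun h => ?_, fun ⟨hfx, hfsx, hgx, hgsx⟩ => ?_⟩
  · have hsum : ‖fs x‖ ^ 2 + ‖f x‖ ^ 2 + (‖gs x‖ ^ 2 + ‖g x‖ ^ 2) = 0 := by
      rw [← re_inner_hodgeLaplacian_apply_self hf, ← re_inner_hodgeLaplacian_apply_self hg,
        ← map_add, ← inner_add_left, ← LinearMap.add_apply, h, inner_zero_left, map_zero]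
    refine ⟨norm_eq_zero.1 ?_, norm_eq_zero.1 ?_, norm_eq_zero.1 ?_, norm_eq_zero.1 ?_⟩ <;>
      nlinarith [norm_nonneg (f x), norm_nonneg (fs x), norm_nonneg (g x), norm_nonneg (gs x)]
  · simp [hodgeLaplacian, hfx, hfsx, hgx, hgsx]

end Positivity

/-- Operator-theoretic core of Theorem 4.1: on an inner product space over ℂ with
operators `μ̄, ∂̄, ∂, μ` (here `mb, pb, p, m`), their adjoints `mbs, pbs, ps, ms`,
and `Λ` satisfying the almost Kähler identities and the bidegree `(1,1)` part of
`d² = 0`, the conditions `(Δ_∂̄ + Δ_μ) x = 0`, `(Δ_∂ + Δ_μ̄) x = 0`,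
`(Δ_μ̄ + Δ_∂̄ + Δ_∂ + Δ_μ) x = 0`, and annihilation of `x` by all eight operators
are equivalent; moreover any such `x` is killed by `d = μ̄ + ∂̄ + ∂ + μ` and
`d* = μ̄* + ∂̄* + ∂* + μ*`. -/
theorem stmt_0 {E : Type*} [NormedAddCommGroup E] [InnerProductSpace ℂ E]
    (mb pb p m mbs pbs ps ms Λ : E →ₗ[ℂ] E)
    (hmb : ∀ x y : E, (inner ℂ (mb x) y : ℂ) = inner ℂ x (mbs y))
    (hpb : ∀ x y : E, (inner ℂ (pb x) y : ℂ) = inner ℂ x (pbs y))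
    (hp : ∀ x y : E, (inner ℂ (p x) y : ℂ) = inner ℂ x (ps y))
    (hm : ∀ x y : E, (inner ℂ (m x) y : ℂ) = inner ℂ x (ms y))
    (h1 : Λ ∘ₗ mb - mb ∘ₗ Λ = Complex.I • ms)
    (h2 : Λ ∘ₗ m - m ∘ₗ Λ = -(Complex.I • mbs))
    (h3 : Λ ∘ₗ pb - pb ∘ₗ Λ = -(Complex.I • ps))
    (h4 : Λ ∘ₗ p - p ∘ₗ Λ = Complex.I • pbs)
    (h5 : m ∘ₗ mb + mb ∘ₗ m + p ∘ₗ pb + pb ∘ₗ p = 0)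
    (x : E) :
    (((pb ∘ₗ pbs + pbs ∘ₗ pb) + (m ∘ₗ ms + ms ∘ₗ m)) x = 0 ↔
      ((p ∘ₗ ps + ps ∘ₗ p) + (mb ∘ₗ mbs + mbs ∘ₗ mb)) x = 0) ∧
    (((pb ∘ₗ pbs + pbs ∘ₗ pb) + (m ∘ₗ ms + ms ∘ₗ m)) x = 0 ↔
      ((mb ∘ₗ mbs + mbs ∘ₗ mb) + (pb ∘ₗ pbs + pbs ∘ₗ pb)
        + (p ∘ₗ ps + ps ∘ₗ p) + (m ∘ₗ ms + ms ∘ₗ m)) x = 0) ∧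
    (((pb ∘ₗ pbs + pbs ∘ₗ pb) + (m ∘ₗ ms + ms ∘ₗ m)) x = 0 ↔
      (mb x = 0 ∧ pb x = 0 ∧ p x = 0 ∧ m x = 0 ∧
        mbs x = 0 ∧ pbs x = 0 ∧ ps x = 0 ∧ ms x = 0)) ∧
    (((pb ∘ₗ pbs + pbs ∘ₗ pb) + (m ∘ₗ ms + ms ∘ₗ m)) x = 0 →
      (mb + pb + p + m) x = 0 ∧ (mbs + pbs + ps + ms) x = 0) := by
  set Δ₁ := (pb ∘ₗ pbs + pbs ∘ₗ pb) + (m ∘ₗ ms + ms ∘ₗ m)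
  set Δ₂ := (p ∘ₗ ps + ps ∘ₗ p) + (mb ∘ₗ mbs + mbs ∘ₗ mb)
  have hΔ : Δ₁ = Δ₂ := hodgeLaplacian_add_eq_of_kahler h1 h2 h3 h4 h5
  have hd : (mb ∘ₗ mbs + mbs ∘ₗ mb) + (pb ∘ₗ pbs + pbs ∘ₗ pb)
      + (p ∘ₗ ps + ps ∘ₗ p) + (m ∘ₗ ms + ms ∘ₗ m) = Δ₁ + Δ₂ := by
    simp only [Δ₁, Δ₂]; abel
  have hkill : Δ₁ x = 0 ↔ mb x = 0 ∧ pb x = 0 ∧ p x = 0 ∧ m x = 0 ∧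
      mbs x = 0 ∧ pbs x = 0 ∧ ps x = 0 ∧ ms x = 0 := by
    have k₁ : Δ₁ x = 0 ↔ pb x = 0 ∧ pbs x = 0 ∧ m x = 0 ∧ ms x = 0 :=
      hodgeLaplacian_add_apply_eq_zero_iff hpb hm x
    have k₂ : Δ₂ x = 0 ↔ p x = 0 ∧ ps x = 0 ∧ mb x = 0 ∧ mbs x = 0 :=
      hodgeLaplacian_add_apply_eq_zero_iff hp hmb x
    calc Δ₁ x = 0 ↔ Δ₁ x = 0 ∧ Δ₂ x = 0 := by rw [← hΔ, and_self]
      _ ↔ _ := by rw [k₁, k₂]; tauto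
  have hd_apply : (Δ₁ + Δ₂) x = (2 : ℂ) • Δ₁ x := by rw [← hΔ, two_smul, LinearMap.add_apply]
  refine ⟨by rw [hΔ], by rw [hd, hd_apply, smul_eq_zero]; simp, hkill, fun h => ?_⟩
  obtain ⟨hmb0, hpb0, hp0, hm0, hmbs0, hpbs0, hps0, hms0⟩ := hkill.1 h
  simp [hmb0, hpb0, hp0, hm0, hmbs0, hpbs0, hps0, hms0]
end

section
/- Let E be a module over ℂ and let μ̄, ∂̄, ∂, μ, μ̄*, ∂̄*, ∂*, μ*, Λ be ℂ-linear endomorphisms of E satisfying Λ∘μ̄ − μ̄∘Λ = i·μ*, Λ∘μ − μ∘Λ = −i·μ̄*, Λ∘∂̄ − ∂̄∘Λ = −i·∂*, Λ∘∂ − ∂∘Λ = i·∂̄*, and μ∘μ̄ + μ̄∘μ + ∂∘∂̄ + ∂̄∘∂ = 0. Then, writing Δ_δ := δ∘δ* + δ*∘δ, one has Δ_∂̄ + Δ_μ = Δ_∂ + Δ_μ̄. -/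
/-- Item (2) of Proposition `AKDeltas`: on any almost Kähler manifold,
`Δ_∂̄ + Δ_μ = Δ_∂ + Δ_μ̄`, stated abstractly for ℂ-linear endomorphisms
satisfying the almost Kähler identities and the bidegree `(1,1)` part of `d² = 0`. -/
theorem stmt_2 {E : Type*} [AddCommGroup E] [Module ℂ E]
    (mb pb p m mbs pbs ps ms Λ : E →ₗ[ℂ] E)
    (h1 : Λ ∘ₗ mb - mb ∘ₗ Λ = Complex.I • ms)
    (h2 : Λ ∘ₗ m - m ∘ₗ Λ = -(Complex.I • mbs))
    (h3 : Λ ∘ₗ pb - pb ∘ₗ Λ = -(Complex.I • ps))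
    (h4 : Λ ∘ₗ p - p ∘ₗ Λ = Complex.I • pbs)
    (h5 : m ∘ₗ mb + mb ∘ₗ m + p ∘ₗ pb + pb ∘ₗ p = 0) :
    (pb ∘ₗ pbs + pbs ∘ₗ pb) + (m ∘ₗ ms + ms ∘ₗ m)
      = (p ∘ₗ ps + ps ∘ₗ p) + (mb ∘ₗ mbs + mbs ∘ₗ mb) := by
  have hms : ms = (-Complex.I) • (Λ ∘ₗ mb - mb ∘ₗ Λ) := by
    rw [h1, smul_smul]; simp
  have hmbs : mbs = Complex.I • (Λ ∘ₗ m - m ∘ₗ Λ) := by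
    rw [h2, smul_neg, smul_smul, Complex.I_mul_I]; simp
  have hps : ps = Complex.I • (Λ ∘ₗ pb - pb ∘ₗ Λ) := by
    rw [h3, smul_neg, smul_smul, Complex.I_mul_I]; simp
  have hpbs : pbs = (-Complex.I) • (Λ ∘ₗ p - p ∘ₗ Λ) := by
    rw [h4, smul_smul]; simp
  subst hms hmbs hps hpbs
  have key : (-Complex.I) • (Λ ∘ₗ (m ∘ₗ mb + mb ∘ₗ m + p ∘ₗ pb + pb ∘ₗ p)
      - (m ∘ₗ mb + mb ∘ₗ m + p ∘ₗ pb + pb ∘ₗ p) ∘ₗ Λ) = 0 := by rw [h5]; simp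
  rw [← sub_eq_zero, ← key]
  simp only [LinearMap.comp_smul, LinearMap.smul_comp, LinearMap.comp_sub,
    LinearMap.sub_comp, LinearMap.comp_add, LinearMap.add_comp, smul_sub, smul_add,
    LinearMap.comp_assoc]
  module
end

section
/- Let E be a module over ℂ and let μ̄, ∂̄, ∂, μ, μ̄*, ∂̄*, ∂*, μ*, Λ be ℂ-linear endomorphisms of E satisfying the seven relations μ∘μ = 0, μ∘∂ + ∂∘μ = 0, μ∘∂̄ + ∂̄∘μ + ∂∘∂ = 0, μ∘μ̄ + μ̄∘μ + ∂∘∂̄ + ∂̄∘∂ = 0, μ̄∘∂ + ∂∘μ̄ + ∂̄∘∂̄ = 0, μ̄∘∂̄ + ∂̄∘μ̄ = 0, μ̄∘μ̄ = 0, together with Λ∘μ̄ − μ̄∘Λ = i·μ*, Λ∘μ − μ∘Λ = −i·μ̄*, Λ∘∂̄ − ∂̄∘Λ = −i·∂*, and Λ∘∂ − ∂∘Λ = i·∂̄*. Set d := μ̄ + ∂̄ + ∂ + μ and d* := μ̄* + ∂̄* + ∂* + μ*, and write Δ_δ := δ∘δ* + δ*∘δ and {A,B} := A∘B + B∘A.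 Then d∘d* + d*∘d = 2·( Δ_∂̄ + Δ_μ + {μ̄, ∂*} + {μ, ∂̄*} + {∂, ∂̄*} + {∂̄, ∂*} ). -/
/-- Item (3) of Proposition `AKDeltas`: with `d = μ̄ + ∂̄ + ∂ + μ` and
`d* = μ̄* + ∂̄* + ∂* + μ*`, the `d`-Laplacian equals
`2(Δ_∂̄ + Δ_μ + {μ̄,∂*} + {μ,∂̄*} + {∂,∂̄*} + {∂̄,∂*})`,
given the seven bidegree components of `d² = 0` and the almost Kähler
identities. -/
theorem stmt_3 {E : Type*} [AddCommGroup E] [Module ℂ E]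
    (mb pb p m mbs pbs ps ms Λ : E →ₗ[ℂ] E)
    (r1 : m ∘ₗ m = 0)
    (r2 : m ∘ₗ p + p ∘ₗ m = 0)
    (r3 : m ∘ₗ pb + pb ∘ₗ m + p ∘ₗ p = 0)
    (r4 : m ∘ₗ mb + mb ∘ₗ m + p ∘ₗ pb + pb ∘ₗ p = 0)
    (r5 : mb ∘ₗ p + p ∘ₗ mb + pb ∘ₗ pb = 0)
    (r6 : mb ∘ₗ pb + pb ∘ₗ mb = 0)
    (r7 : mb ∘ₗ mb = 0)
    (h1 : Λ ∘ₗ mb - mb ∘ₗ Λ = Complex.I • ms)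
    (h2 : Λ ∘ₗ m - m ∘ₗ Λ = -(Complex.I • mbs))
    (h3 : Λ ∘ₗ pb - pb ∘ₗ Λ = -(Complex.I • ps))
    (h4 : Λ ∘ₗ p - p ∘ₗ Λ = Complex.I • pbs) :
    (mb + pb + p + m) ∘ₗ (mbs + pbs + ps + ms)
      + (mbs + pbs + ps + ms) ∘ₗ (mb + pb + p + m)
    = (2 : ℂ) • ((pb ∘ₗ pbs + pbs ∘ₗ pb) + (m ∘ₗ ms + ms ∘ₗ m)
        + (mb ∘ₗ ps + ps ∘ₗ mb) + (m ∘ₗ pbs + pbs ∘ₗ m)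
        + (p ∘ₗ pbs + pbs ∘ₗ p) + (pb ∘ₗ ps + ps ∘ₗ pb)) := by
  have hms : ms = (-Complex.I) • (Λ ∘ₗ mb - mb ∘ₗ Λ) := by
    rw [h1, smul_smul]; simp [Complex.I_mul_I]
  have hmbs : mbs = Complex.I • (Λ ∘ₗ m - m ∘ₗ Λ) := by
    rw [h2]; simp [smul_smul, Complex.I_mul_I]
  have hps : ps = Complex.I • (Λ ∘ₗ pb - pb ∘ₗ Λ) := by
    rw [h3]; simp [smul_smul, Complex.I_mul_I]
  have hpbs : pbs = (-Complex.I) • (Λ ∘ₗ p - p ∘ₗ Λ) := by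
    rw [h4, smul_smul]; simp [Complex.I_mul_I]
  rw [hms, hmbs, hps, hpbs, ← sub_eq_zero]
  have hX : (m ∘ₗ m) + (m ∘ₗ p + p ∘ₗ m) + (m ∘ₗ pb + pb ∘ₗ m + p ∘ₗ p)
      + (m ∘ₗ mb + mb ∘ₗ m + p ∘ₗ pb + pb ∘ₗ p)
      - ((mb ∘ₗ p + p ∘ₗ mb + pb ∘ₗ pb) + (mb ∘ₗ pb + pb ∘ₗ mb) + mb ∘ₗ mb)
      = 0 := by
    rw [r1, r2, r3, r4, r5, r6, r7]; simp
  rw [show (0 : E →ₗ[ℂ] E) = Complex.I •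
      (Λ ∘ₗ ((m ∘ₗ m) + (m ∘ₗ p + p ∘ₗ m) + (m ∘ₗ pb + pb ∘ₗ m + p ∘ₗ p)
        + (m ∘ₗ mb + mb ∘ₗ m + p ∘ₗ pb + pb ∘ₗ p)
        - ((mb ∘ₗ p + p ∘ₗ mb + pb ∘ₗ pb) + (mb ∘ₗ pb + pb ∘ₗ mb) + mb ∘ₗ mb))
      - ((m ∘ₗ m) + (m ∘ₗ p + p ∘ₗ m) + (m ∘ₗ pb + pb ∘ₗ m + p ∘ₗ p)
        + (m ∘ₗ mb + mb ∘ₗ m + p ∘ₗ pb + pb ∘ₗ p)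
        - ((mb ∘ₗ p + p ∘ₗ mb + pb ∘ₗ pb) + (mb ∘ₗ pb + pb ∘ₗ mb) + mb ∘ₗ mb)) ∘ₗ Λ)
      from by rw [hX]; simp]
  simp only [← Module.End.mul_eq_comp]
  noncomm_ring [smul_add, smul_sub, smul_neg, neg_smul, two_smul]
end

section
/- Let E be a module over ℂ and let μ̄, ∂̄, μ*, ∂*, Λ be ℂ-linear endomorphisms of E satisfying μ̄∘∂̄ + ∂̄∘μ̄ = 0, Λ∘μ̄ − μ̄∘Λ = i·μ*, and Λ∘∂̄ − ∂̄∘Λ = −i·∂*. Then μ̄∘∂* + ∂*∘μ̄ = ∂̄∘μ* + μ*∘∂̄. Likewise, if μ, ∂, μ̄*, ∂̄*, Λ are ℂ-linear endomorphisms of E satisfying μ∘∂ + ∂∘μ = 0, Λ∘μ − μ∘Λ = −i·μ̄*, and Λ∘∂ − ∂∘Λ = i·∂̄*, then μ∘∂̄* + ∂̄*∘μ = ∂∘μ̄* + μ̄*∘∂. -/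
lemma stmt_6_aux {E : Type*} [AddCommGroup E] [Module ℂ E]
    (mb pb ms ps Λ : E →ₗ[ℂ] E)
    (h1 : mb ∘ₗ pb + pb ∘ₗ mb = 0)
    (h2 : Λ ∘ₗ mb - mb ∘ₗ Λ = Complex.I • ms)
    (h3 : Λ ∘ₗ pb - pb ∘ₗ Λ = -(Complex.I • ps)) :
    mb ∘ₗ ps + ps ∘ₗ mb = pb ∘ₗ ms + ms ∘ₗ pb := by
  have hps : Complex.I • ps = pb ∘ₗ Λ - Λ ∘ₗ pb := by
    have := congrArg Neg.neg h3
    simp only [neg_neg, neg_sub] at this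
    exact this.symm
  have hms : Complex.I • ms = Λ ∘ₗ mb - mb ∘ₗ Λ := h2.symm
  apply smul_right_injective (E →ₗ[ℂ] E) Complex.I_ne_zero
  calc Complex.I • (mb ∘ₗ ps + ps ∘ₗ mb)
      = mb ∘ₗ (Complex.I • ps) + (Complex.I • ps) ∘ₗ mb := by
        rw [smul_add, LinearMap.comp_smul, LinearMap.smul_comp]
    _ = mb ∘ₗ (pb ∘ₗ Λ - Λ ∘ₗ pb) + (pb ∘ₗ Λ - Λ ∘ₗ pb) ∘ₗ mb := by rw [hps]
    _ = (mb ∘ₗ pb + pb ∘ₗ mb) ∘ₗ Λ - Λ ∘ₗ (mb ∘ₗ pb + pb ∘ₗ mb)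
        + (pb ∘ₗ (Λ ∘ₗ mb - mb ∘ₗ Λ) + (Λ ∘ₗ mb - mb ∘ₗ Λ) ∘ₗ pb) := by
        simp only [LinearMap.comp_sub, LinearMap.sub_comp, LinearMap.comp_add,
          LinearMap.add_comp, LinearMap.comp_assoc]
        abel
    _ = pb ∘ₗ (Complex.I • ms) + (Complex.I • ms) ∘ₗ pb := by
        rw [h1, hms]; simp
    _ = Complex.I • (pb ∘ₗ ms + ms ∘ₗ pb) := by
        rw [smul_add, LinearMap.comp_smul, LinearMap.smul_comp]

/-- Item (2) of Proposition `AKidentities2`: the graded commutator identities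
`[μ̄, ∂*] = [∂̄, μ*]` and (likewise) `[μ, ∂̄*] = [∂, μ̄*]`. -/
theorem stmt_6 {E : Type*} [AddCommGroup E] [Module ℂ E] :
    (∀ (mb pb ms ps Λ : E →ₗ[ℂ] E),
      mb ∘ₗ pb + pb ∘ₗ mb = 0 →
      Λ ∘ₗ mb - mb ∘ₗ Λ = Complex.I • ms →
      Λ ∘ₗ pb - pb ∘ₗ Λ = -(Complex.I • ps) →
      mb ∘ₗ ps + ps ∘ₗ mb = pb ∘ₗ ms + ms ∘ₗ pb) ∧
    (∀ (m p mbs pbs Λ : E →ₗ[ℂ] E),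
      m ∘ₗ p + p ∘ₗ m = 0 →
      Λ ∘ₗ m - m ∘ₗ Λ = -(Complex.I • mbs) →
      Λ ∘ₗ p - p ∘ₗ Λ = Complex.I • pbs →
      m ∘ₗ pbs + pbs ∘ₗ m = p ∘ₗ mbs + mbs ∘ₗ p) := by
  refine ⟨stmt_6_aux, fun m p mbs pbs Λ h1 h2 h3 => ?_⟩
  have := stmt_6_aux p m pbs mbs Λ (by rw [add_comm]; exact h1) h3 h2
  exact this.symm
end

section
/- Let E be a module over ℂ and let μ̄, ∂̄, ∂, μ, μ̄*, ∂̄*, ∂*, μ*, Λ be ℂ-linear endomorphisms of E satisfying Λ∘∂ − ∂∘Λ = i·∂̄*, Λ∘∂̄ − ∂̄∘Λ = −i·∂*, Λ∘μ − μ∘Λ = −i·μ̄*, and μ∘∂̄ + ∂̄∘μ + ∂∘∂ = 0. Then ∂∘∂̄* + ∂̄*∘∂ = (μ̄*∘∂̄ + ∂̄∘μ̄*) + (μ∘∂* + ∂*∘μ). Likewise, if instead Λ∘∂̄ − ∂̄∘Λ = −i·∂*, Λ∘∂ − ∂∘Λ = i·∂̄*, Λ∘μ̄ − μ̄∘Λ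 = i·μ*, and μ̄∘∂ + ∂∘μ̄ + ∂̄∘∂̄ = 0, then ∂̄∘∂* + ∂*∘∂̄ = (μ*∘∂ + ∂∘μ*) + (μ̄∘∂̄* + ∂̄*∘μ̄). -/
lemma aux1 {A : Type*} [Ring A] [Algebra ℂ A] (pb p m mbs pbs ps Λ : A)
    (h1 : Λ * p - p * Λ = Complex.I • pbs)
    (h2 : Λ * pb - pb * Λ = -(Complex.I • ps))
    (h3 : Λ * m - m * Λ = -(Complex.I • mbs))
    (h4 : m * pb + pb * m + p * p = 0) :
    p * pbs + pbs * p = (mbs * pb + pb * mbs) + (m * ps + ps * m) := by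
  have e2 : Complex.I • ps = pb * Λ - Λ * pb := by rw [← neg_sub, h2, neg_neg]
  have e3 : Complex.I • mbs = m * Λ - Λ * m := by rw [← neg_sub, h3, neg_neg]
  have e4 : p * p = -(m * pb + pb * m) := by
    rw [add_comm] at h4; exact eq_neg_of_add_eq_zero_left h4
  have hA : Complex.I • (p * pbs + pbs * p) = Λ * (p * p) - (p * p) * Λ := by
    rw [smul_add, ← mul_smul_comm, ← smul_mul_assoc, ← h1]; noncomm_ring
  have hB : Complex.I • ((mbs * pb + pb * mbs) + (m * ps + ps * m))
      = (m * pb + pb * m) * Λ - Λ * (m * pb + pb * m) := by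
    rw [smul_add, smul_add, smul_add, ← smul_mul_assoc, ← mul_smul_comm,
      ← mul_smul_comm, ← smul_mul_assoc, e2, e3]; noncomm_ring
  refine smul_right_injective _ Complex.I_ne_zero ?_
  beta_reduce
  rw [hA, hB, e4]; noncomm_ring

lemma aux2 {A : Type*} [Ring A] [Algebra ℂ A] (mb pb p pbs ps ms Λ : A)
    (h1 : Λ * pb - pb * Λ = -(Complex.I • ps))
    (h2 : Λ * p - p * Λ = Complex.I • pbs)
    (h3 : Λ * mb - mb * Λ = Complex.I • ms)
    (h4 : mb * p + p * mb + pb * pb = 0) :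
    pb * ps + ps * pb = (ms * p + p * ms) + (mb * pbs + pbs * mb) := by
  have e1 : Complex.I • ps = pb * Λ - Λ * pb := by rw [← neg_sub, h1, neg_neg]
  have e4 : pb * pb = -(mb * p + p * mb) := by
    rw [add_comm] at h4; exact eq_neg_of_add_eq_zero_left h4
  have hA : Complex.I • (pb * ps + ps * pb) = (pb * pb) * Λ - Λ * (pb * pb) := by
    rw [smul_add, ← mul_smul_comm, ← smul_mul_assoc, e1]; noncomm_ring
  have hB : Complex.I • ((ms * p + p * ms) + (mb * pbs + pbs * mb))
      = Λ * (mb * p + p * mb) - (mb * p + p * mb) * Λ := by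
    rw [smul_add, smul_add, smul_add, ← smul_mul_assoc, ← mul_smul_comm,
      ← mul_smul_comm, ← smul_mul_assoc, ← h2, ← h3]; noncomm_ring
  refine smul_right_injective _ Complex.I_ne_zero ?_
  beta_reduce
  rw [hA, hB, e4]; noncomm_ring

/-- Item (3) of Proposition `AKidentities2`: the graded commutator identities
`[∂, ∂̄*] = [μ̄*, ∂̄] + [μ, ∂*]` and (likewise) `[∂̄, ∂*] = [μ*, ∂] + [μ̄, ∂̄*]`. -/
theorem stmt_7 {E : Type*} [AddCommGroup E] [Module ℂ E] :
    (∀ (mb pb p m mbs pbs ps ms Λ : E →ₗ[ℂ] E),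
      Λ ∘ₗ p - p ∘ₗ Λ = Complex.I • pbs →
      Λ ∘ₗ pb - pb ∘ₗ Λ = -(Complex.I • ps) →
      Λ ∘ₗ m - m ∘ₗ Λ = -(Complex.I • mbs) →
      m ∘ₗ pb + pb ∘ₗ m + p ∘ₗ p = 0 →
      p ∘ₗ pbs + pbs ∘ₗ p = (mbs ∘ₗ pb + pb ∘ₗ mbs) + (m ∘ₗ ps + ps ∘ₗ m)) ∧
    (∀ (mb pb p m mbs pbs ps ms Λ : E →ₗ[ℂ] E),
      Λ ∘ₗ pb - pb ∘ₗ Λ = -(Complex.I • ps) →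
      Λ ∘ₗ p - p ∘ₗ Λ = Complex.I • pbs →
      Λ ∘ₗ mb - mb ∘ₗ Λ = Complex.I • ms →
      mb ∘ₗ p + p ∘ₗ mb + pb ∘ₗ pb = 0 →
      pb ∘ₗ ps + ps ∘ₗ pb = (ms ∘ₗ p + p ∘ₗ ms) + (mb ∘ₗ pbs + pbs ∘ₗ mb)) := by
  constructor
  · intro mb pb p m mbs pbs ps ms Λ h1 h2 h3 h4
    simp only [← Module.End.mul_eq_comp] at *
    exact aux1 pb p m mbs pbs ps Λ h1 h2 h3 h4
  · intro mb pb p m mbs pbs ps ms Λ h1 h2 h3 h4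
    simp only [← Module.End.mul_eq_comp] at *
    exact aux2 mb pb p pbs ps ms Λ h1 h2 h3 h4
end

section
/- Let E be a module over ℂ and let μ̄, ∂̄, ∂, μ, μ̄*, ∂̄*, ∂*, μ*, L be ℂ-linear endomorphisms of E satisfying L∘μ̄ = μ̄∘L, L∘∂̄ = ∂̄∘L, L∘∂ = ∂∘L, L∘μ = μ∘L, L∘∂̄* − ∂̄*∘L = −i·∂, L∘∂* − ∂*∘L = i·∂̄, L∘μ̄* − μ̄*∘L = i·μ, L∘μ* − μ*∘L = −i·μ̄, and μ∘μ̄ + μ̄∘μ + ∂∘∂̄ + ∂̄∘∂ = 0. Then, writing Δ_δ := δ∘δ* + δ*∘δ and [L, A] := L∘A − A∘L, one has [L, Δ_∂̄] = [L, Δ_μ̄] = −[L, Δ_∂] = −[L, Δ_μ] = −i·(∂̄∘∂ + ∂∘∂̄) = i·(μ̄∘μ + μ∘μ̄). -/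
private lemma key_comm {E : Type*} [AddCommGroup E] [Module ℂ E]
    (L A B C : E →ₗ[ℂ] E) (hA : L ∘ₗ A = A ∘ₗ L) (hB : L ∘ₗ B - B ∘ₗ L = C) :
    L ∘ₗ (A ∘ₗ B + B ∘ₗ A) - (A ∘ₗ B + B ∘ₗ A) ∘ₗ L = A ∘ₗ C + C ∘ₗ A := by
  rw [← hB]
  simp only [← Module.End.mul_eq_comp] at hA ⊢
  simp only [mul_add, add_mul, mul_sub, sub_mul]
  rw [show L * (A * B) = A * (L * B) by rw [← mul_assoc, hA, mul_assoc],
      show (B * A) * L = (B * L) * A by rw [mul_assoc, ← hA, ← mul_assoc],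
      ← mul_assoc L B A, mul_assoc A B L]
  abel

/-- Item (1) of Corollary `LDeltaetc`: commutators of the Lefschetz operator `L`
with the four Laplacians:
`[L, Δ_∂̄] = [L, Δ_μ̄] = −[L, Δ_∂] = −[L, Δ_μ] = −i[∂̄,∂] = i[μ̄,μ]`. -/
theorem stmt_8 {E : Type*} [AddCommGroup E] [Module ℂ E]
    (mb pb p m mbs pbs ps ms L : E →ₗ[ℂ] E)
    (c1 : L ∘ₗ mb = mb ∘ₗ L)
    (c2 : L ∘ₗ pb = pb ∘ₗ L)
    (c3 : L ∘ₗ p = p ∘ₗ L)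
    (c4 : L ∘ₗ m = m ∘ₗ L)
    (h1 : L ∘ₗ pbs - pbs ∘ₗ L = -(Complex.I • p))
    (h2 : L ∘ₗ ps - ps ∘ₗ L = Complex.I • pb)
    (h3 : L ∘ₗ mbs - mbs ∘ₗ L = Complex.I • m)
    (h4 : L ∘ₗ ms - ms ∘ₗ L = -(Complex.I • mb))
    (h5 : m ∘ₗ mb + mb ∘ₗ m + p ∘ₗ pb + pb ∘ₗ p = 0) :
    (L ∘ₗ (pb ∘ₗ pbs + pbs ∘ₗ pb) - (pb ∘ₗ pbs + pbs ∘ₗ pb) ∘ₗ L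
      = L ∘ₗ (mb ∘ₗ mbs + mbs ∘ₗ mb) - (mb ∘ₗ mbs + mbs ∘ₗ mb) ∘ₗ L) ∧
    (L ∘ₗ (pb ∘ₗ pbs + pbs ∘ₗ pb) - (pb ∘ₗ pbs + pbs ∘ₗ pb) ∘ₗ L
      = -(L ∘ₗ (p ∘ₗ ps + ps ∘ₗ p) - (p ∘ₗ ps + ps ∘ₗ p) ∘ₗ L)) ∧
    (L ∘ₗ (pb ∘ₗ pbs + pbs ∘ₗ pb) - (pb ∘ₗ pbs + pbs ∘ₗ pb) ∘ₗ L
      = -(L ∘ₗ (m ∘ₗ ms + ms ∘ₗ m) - (m ∘ₗ ms + ms ∘ₗ m) ∘ₗ L)) ∧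
    (L ∘ₗ (pb ∘ₗ pbs + pbs ∘ₗ pb) - (pb ∘ₗ pbs + pbs ∘ₗ pb) ∘ₗ L
      = -(Complex.I • (pb ∘ₗ p + p ∘ₗ pb))) ∧
    (L ∘ₗ (pb ∘ₗ pbs + pbs ∘ₗ pb) - (pb ∘ₗ pbs + pbs ∘ₗ pb) ∘ₗ L
      = Complex.I • (mb ∘ₗ m + m ∘ₗ mb)) := by
  have e1 := key_comm L pb pbs _ c2 h1
  have e2 := key_comm L mb mbs _ c1 h3
  have e3 := key_comm L p ps _ c3 h2
  have e4 := key_comm L m ms _ c4 h4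
  rw [e1, e2, e3, e4]
  have h5' : mb ∘ₗ m + m ∘ₗ mb = -(pb ∘ₗ p + p ∘ₗ pb) := by
    rw [← sub_eq_zero, ← h5]; abel
  simp only [LinearMap.comp_neg, LinearMap.neg_comp, LinearMap.comp_smul, LinearMap.smul_comp]
  have key := congrArg (fun X : E →ₗ[ℂ] E => Complex.I • X) h5'
  simp only [smul_add, smul_neg] at key
  refine ⟨?_, ?_, ?_, ?_, ?_⟩
  · rw [key]; abel
  · abel
  · rw [show (-(-(Complex.I • m ∘ₗ mb) + -(Complex.I • mb ∘ₗ m)) : E →ₗ[ℂ] E)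
        = Complex.I • mb ∘ₗ m + Complex.I • m ∘ₗ mb by abel, key]
    abel
  · rw [smul_add]; abel
  · rw [smul_add, key]; abel
end

section
/- Let E be a module over ℂ and let μ̄, ∂̄, ∂, μ, μ̄*, ∂̄*, ∂*, μ*, Λ be ℂ-linear endomorphisms of E satisfying Λ∘μ̄* = μ̄*∘Λ, Λ∘∂̄* = ∂̄*∘Λ, Λ∘∂* = ∂*∘Λ, Λ∘μ* = μ*∘Λ, Λ∘∂̄ − ∂̄∘Λ = −i·∂*, Λ∘∂ − ∂∘Λ = i·∂̄*, Λ∘μ̄ − μ̄∘Λ = i·μ*, Λ∘μ − μ∘Λ = −i·μ̄*, and μ*∘μ̄* + μ̄*∘μ* + ∂*∘∂̄* + ∂̄*∘∂* = 0. Then, writing Δ_δ := δ∘δ* + δ*∘δ and [Λ, A] := Λ∘A − A∘Λ, one has [Λ, Δ_∂̄] = [Λ, Δ_μ̄] = −[Λ, Δ_∂] = −[Λ, Δ_μ] = −i·(∂̄*∘∂* + ∂*∘∂̄*) = i·(μ̄*∘μ* + μ*∘μ̄*). -/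
private theorem comm_helper {R : Type*} [Ring R] (L d ds X : R)
    (hc : L * ds - ds * L = 0) (hd : L * d - d * L = X) :
    L * (d * ds + ds * d) - (d * ds + ds * d) * L = X * ds + ds * X := by
  have h : L * (d * ds + ds * d) - (d * ds + ds * d) * L
      = (L * d - d * L) * ds + ds * (L * d - d * L)
        + ((L * ds - ds * L) * d + d * (L * ds - ds * L)) := by noncomm_ring
  rw [h, hc, hd]
  noncomm_ring

/-- Item (2) of Corollary `LDeltaetc`: commutators of the dual Lefschetz operator
`Λ` with the four Laplacians:
`[Λ, Δ_∂̄] = [Λ, Δ_μ̄] = −[Λ, Δ_∂] = −[Λ, Δ_μ] = −i[∂̄*,∂*] = i[μ̄*,μ*]`. -/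
theorem stmt_9 {E : Type*} [AddCommGroup E] [Module ℂ E]
    (mb pb p m mbs pbs ps ms Λ : E →ₗ[ℂ] E)
    (c1 : Λ ∘ₗ mbs = mbs ∘ₗ Λ)
    (c2 : Λ ∘ₗ pbs = pbs ∘ₗ Λ)
    (c3 : Λ ∘ₗ ps = ps ∘ₗ Λ)
    (c4 : Λ ∘ₗ ms = ms ∘ₗ Λ)
    (h1 : Λ ∘ₗ pb - pb ∘ₗ Λ = -(Complex.I • ps))
    (h2 : Λ ∘ₗ p - p ∘ₗ Λ = Complex.I • pbs)
    (h3 : Λ ∘ₗ mb - mb ∘ₗ Λ = Complex.I • ms)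
    (h4 : Λ ∘ₗ m - m ∘ₗ Λ = -(Complex.I • mbs))
    (h5 : ms ∘ₗ mbs + mbs ∘ₗ ms + ps ∘ₗ pbs + pbs ∘ₗ ps = 0) :
    (Λ ∘ₗ (pb ∘ₗ pbs + pbs ∘ₗ pb) - (pb ∘ₗ pbs + pbs ∘ₗ pb) ∘ₗ Λ
      = Λ ∘ₗ (mb ∘ₗ mbs + mbs ∘ₗ mb) - (mb ∘ₗ mbs + mbs ∘ₗ mb) ∘ₗ Λ) ∧
    (Λ ∘ₗ (pb ∘ₗ pbs + pbs ∘ₗ pb) - (pb ∘ₗ pbs + pbs ∘ₗ pb) ∘ₗ Λ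
      = -(Λ ∘ₗ (p ∘ₗ ps + ps ∘ₗ p) - (p ∘ₗ ps + ps ∘ₗ p) ∘ₗ Λ)) ∧
    (Λ ∘ₗ (pb ∘ₗ pbs + pbs ∘ₗ pb) - (pb ∘ₗ pbs + pbs ∘ₗ pb) ∘ₗ Λ
      = -(Λ ∘ₗ (m ∘ₗ ms + ms ∘ₗ m) - (m ∘ₗ ms + ms ∘ₗ m) ∘ₗ Λ)) ∧
    (Λ ∘ₗ (pb ∘ₗ pbs + pbs ∘ₗ pb) - (pb ∘ₗ pbs + pbs ∘ₗ pb) ∘ₗ Λ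
      = -(Complex.I • (pbs ∘ₗ ps + ps ∘ₗ pbs))) ∧
    (Λ ∘ₗ (pb ∘ₗ pbs + pbs ∘ₗ pb) - (pb ∘ₗ pbs + pbs ∘ₗ pb) ∘ₗ Λ
      = Complex.I • (mbs ∘ₗ ms + ms ∘ₗ mbs)) := by
  simp only [← Module.End.mul_eq_comp] at *
  have hA := comm_helper Λ pb pbs _ (sub_eq_zero.mpr c2) h1
  have hB := comm_helper Λ mb mbs _ (sub_eq_zero.mpr c1) h3
  have hC := comm_helper Λ p ps _ (sub_eq_zero.mpr c3) h2
  have hD := comm_helper Λ m ms _ (sub_eq_zero.mpr c4) h4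
  have hA' : Λ * (pb * pbs + pbs * pb) - (pb * pbs + pbs * pb) * Λ
      = -(Complex.I • (ps * pbs + pbs * ps)) := by
    rw [hA]; simp only [smul_add, neg_mul, mul_neg, smul_mul_assoc, mul_smul_comm]; abel
  have hC' : Λ * (p * ps + ps * p) - (p * ps + ps * p) * Λ
      = Complex.I • (pbs * ps + ps * pbs) := by
    rw [hC]; simp only [smul_add, smul_mul_assoc, mul_smul_comm]
  have hD' : Λ * (m * ms + ms * m) - (m * ms + ms * m) * Λ
      = -(Complex.I • (mbs * ms + ms * mbs)) := by
    rw [hD]; simp only [smul_add, neg_mul, mul_neg, smul_mul_assoc, mul_smul_comm]; abel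
  have hB' : Λ * (mb * mbs + mbs * mb) - (mb * mbs + mbs * mb) * Λ
      = Complex.I • (ms * mbs + mbs * ms) := by
    rw [hB]; simp only [smul_add, smul_mul_assoc, mul_smul_comm]
  have h5' : ms * mbs + mbs * ms = -(ps * pbs + pbs * ps) := by
    have := h5; linear_combination (norm := noncomm_ring) h5
  refine ⟨?_, ?_, ?_, ?_, ?_⟩
  · rw [hA', hB', h5', smul_neg]
  · rw [hA', hC']; rw [show pbs * ps + ps * pbs = ps * pbs + pbs * ps from add_comm _ _]
  · rw [hA', hD', neg_neg]
    rw [show mbs * ms + ms * mbs = ms * mbs + mbs * ms from add_comm _ _, h5', smul_neg]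
  · rw [hA', show pbs * ps + ps * pbs = ps * pbs + pbs * ps from add_comm _ _]
  · rw [hA', show mbs * ms + ms * mbs = ms * mbs + mbs * ms from add_comm _ _, h5', smul_neg]
end

section
/- Let E be a module over ℂ and let μ̄, ∂̄, ∂, μ, μ̄*, ∂̄*, ∂*, μ*, L, Λ be ℂ-linear endomorphisms of E satisfying: L∘μ̄ = μ̄∘L, L∘∂̄ = ∂̄∘L, L∘∂ = ∂∘L, L∘μ = μ∘L, L∘∂̄* − ∂̄*∘L = −i·∂, L∘μ̄* − μ̄*∘L = i·μ, L∘∂* − ∂*∘L = i·∂̄, L∘μ* − μ*∘L = −i·μ̄, Λ∘μ̄* = μ̄*∘Λ, Λ∘∂̄* = ∂̄*∘Λ, Λ∘∂* = ∂*∘Λ, Λ∘μ* = μ*∘Λ, Λ∘∂̄ − ∂̄∘Λ = −i·∂*, Λ∘μ̄ − μ̄∘Λ = i·μ*, Λ∘∂ − ∂∘Λ = i·∂̄*, Λ∘μ − μ∘Λ = −i·μ̄*, together with μ∘μ̄ + μ̄∘μ + ∂∘∂̄ + ∂̄∘∂ = 0 and μ*∘μ̄* + μ̄*∘μ* + ∂*∘∂̄*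 + ∂̄*∘∂* = 0. Then, writing Δ_δ := δ∘δ* + δ*∘δ, both L and Λ commute with Δ_∂̄ + Δ_μ, i.e. L∘(Δ_∂̄ + Δ_μ) = (Δ_∂̄ + Δ_μ)∘L and Λ∘(Δ_∂̄ + Δ_μ) = (Δ_∂̄ + Δ_μ)∘Λ; consequently L and Λ map the kernel of Δ_∂̄ + Δ_μ into itself. -/
private lemma comm_aux {E : Type*} [AddCommGroup E] [Module ℂ E]
    (a as b bs u v T : E →ₗ[ℂ] E)
    (ca : T * a = a * T)
    (cb : T * b = b * T)
    (ha : T * as - as * T = -(Complex.I • u))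
    (hb : T * bs - bs * T = -(Complex.I • v))
    (r : b * v + v * b + u * a + a * u = 0) :
    T * ((a * as + as * a) + (b * bs + bs * b))
      = ((a * as + as * a) + (b * bs + bs * b)) * T := by
  have key : T * ((a * as + as * a) + (b * bs + bs * b))
      - ((a * as + as * a) + (b * bs + bs * b)) * T
      = a * (T * as - as * T) + (T * as - as * T) * a
        + (T * a - a * T) * as + as * (T * a - a * T)
        + b * (T * bs - bs * T) + (T * bs - bs * T) * b
        + (T * b - b * T) * bs + bs * (T * b - b * T) := by
    noncomm_ring
  rw [ca, cb, ha, hb] at key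
  simp only [sub_self, zero_mul, mul_zero, add_zero] at key
  have aux : a * -(Complex.I • u) + -(Complex.I • u) * a
      + b * -(Complex.I • v) + -(Complex.I • v) * b
      = -(Complex.I • (b * v + v * b + u * a + a * u)) := by
    simp only [mul_neg, neg_mul, mul_smul_comm, smul_mul_assoc, smul_add]
    abel
  rw [r, smul_zero, neg_zero] at aux
  refine sub_eq_zero.mp ?_
  rw [key, aux]

/-- Key step in the Generalized Hard Lefschetz Duality theorem: `L` and `Λ`
commute with the elliptic operator `Δ_∂̄ + Δ_μ`, hence preserve its kernel
(the space of `∂̄`-`μ`-harmonic forms). -/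
theorem stmt_10 {E : Type*} [AddCommGroup E] [Module ℂ E]
    (mb pb p m mbs pbs ps ms L Λ : E →ₗ[ℂ] E)
    (c1 : L ∘ₗ mb = mb ∘ₗ L)
    (c2 : L ∘ₗ pb = pb ∘ₗ L)
    (c3 : L ∘ₗ p = p ∘ₗ L)
    (c4 : L ∘ₗ m = m ∘ₗ L)
    (h1 : L ∘ₗ pbs - pbs ∘ₗ L = -(Complex.I • p))
    (h2 : L ∘ₗ mbs - mbs ∘ₗ L = Complex.I • m)
    (h3 : L ∘ₗ ps - ps ∘ₗ L = Complex.I • pb)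
    (h4 : L ∘ₗ ms - ms ∘ₗ L = -(Complex.I • mb))
    (c5 : Λ ∘ₗ mbs = mbs ∘ₗ Λ)
    (c6 : Λ ∘ₗ pbs = pbs ∘ₗ Λ)
    (c7 : Λ ∘ₗ ps = ps ∘ₗ Λ)
    (c8 : Λ ∘ₗ ms = ms ∘ₗ Λ)
    (h5 : Λ ∘ₗ pb - pb ∘ₗ Λ = -(Complex.I • ps))
    (h6 : Λ ∘ₗ mb - mb ∘ₗ Λ = Complex.I • ms)
    (h7 : Λ ∘ₗ p - p ∘ₗ Λ = Complex.I • pbs)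
    (h8 : Λ ∘ₗ m - m ∘ₗ Λ = -(Complex.I • mbs))
    (r1 : m ∘ₗ mb + mb ∘ₗ m + p ∘ₗ pb + pb ∘ₗ p = 0)
    (r2 : ms ∘ₗ mbs + mbs ∘ₗ ms + ps ∘ₗ pbs + pbs ∘ₗ ps = 0) :
    (L ∘ₗ ((pb ∘ₗ pbs + pbs ∘ₗ pb) + (m ∘ₗ ms + ms ∘ₗ m))
      = ((pb ∘ₗ pbs + pbs ∘ₗ pb) + (m ∘ₗ ms + ms ∘ₗ m)) ∘ₗ L) ∧
    (Λ ∘ₗ ((pb ∘ₗ pbs + pbs ∘ₗ pb) + (m ∘ₗ ms + ms ∘ₗ m))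
      = ((pb ∘ₗ pbs + pbs ∘ₗ pb) + (m ∘ₗ ms + ms ∘ₗ m)) ∘ₗ Λ) ∧
    (∀ x ∈ LinearMap.ker ((pb ∘ₗ pbs + pbs ∘ₗ pb) + (m ∘ₗ ms + ms ∘ₗ m)),
      L x ∈ LinearMap.ker ((pb ∘ₗ pbs + pbs ∘ₗ pb) + (m ∘ₗ ms + ms ∘ₗ m)) ∧
      Λ x ∈ LinearMap.ker ((pb ∘ₗ pbs + pbs ∘ₗ pb) + (m ∘ₗ ms + ms ∘ₗ m))) := by
  simp only [← Module.End.mul_eq_comp] at c1 c2 c3 c4 h1 h2 h3 h4 c5 c6 c7 c8 h5 h6 h7 h8 r1 r2 ⊢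
  have r1' : m * mb + mb * m + p * pb + pb * p = 0 := r1
  have r2' : ms * mbs + mbs * ms + ps * pbs + pbs * ps = 0 := r2
  have hL : L * ((pb * pbs + pbs * pb) + (m * ms + ms * m))
      = ((pb * pbs + pbs * pb) + (m * ms + ms * m)) * L :=
    comm_aux pb pbs m ms p mb L c2 c4 h1 h4 r1'
  have hΛ' : Λ * ((pbs * pb + pb * pbs) + (ms * m + m * ms))
      = ((pbs * pb + pb * pbs) + (ms * m + m * ms)) * Λ :=
    comm_aux pbs pb ms m ps mbs Λ c6 c8 h5 h8 r2'
  have hswap : (pb * pbs + pbs * pb) + (m * ms + ms * m)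
      = (pbs * pb + pb * pbs) + (ms * m + m * ms) := by abel
  have hΛ : Λ * ((pb * pbs + pbs * pb) + (m * ms + ms * m))
      = ((pb * pbs + pbs * pb) + (m * ms + ms * m)) * Λ := by
    rw [hswap]; exact hΛ'
  refine ⟨hL, hΛ, fun x hx => ?_⟩
  rw [LinearMap.mem_ker] at hx
  constructor <;> rw [LinearMap.mem_ker]
  · have := congrArg (fun f : E →ₗ[ℂ] E => f x) hL.symm
    simpa [Module.End.mul_apply, hx] using this
  · have := congrArg (fun f : E →ₗ[ℂ] E => f x) hΛ.symm
    simpa [Module.End.mul_apply, hx] using this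
end

section
/- Let E be a module over ℂ and let μ̄, μ, μ̄*, μ*, Λ be ℂ-linear endomorphisms of E satisfying Λ∘μ̄ − μ̄∘Λ = i·μ* and Λ∘μ − μ∘Λ = −i·μ̄*. Then, writing Δ_δ := δ∘δ* + δ*∘δ, one has Δ_μ̄ − Δ_μ = i·( Λ∘(μ∘μ̄ + μ̄∘μ) − (μ∘μ̄ + μ̄∘μ)∘Λ ). Likewise, if ∂̄, ∂, ∂̄*, ∂*, Λ satisfy Λ∘∂̄ − ∂̄∘Λ = −i·∂* and Λ∘∂ − ∂∘Λ = i·∂̄*, then Δ_∂̄ − Δ_∂ = −i·( Λ∘(∂∘∂̄ + ∂̄∘∂) − (∂∘∂̄ + ∂̄∘∂)∘Λ ). -/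
lemma auxc {A : Type*} [Ring A] [Module ℂ A] [SMulCommClass ℂ A A] [IsScalarTower ℂ A A]
    (c : ℂ) (hc : c * c = -1) (mb m mbs ms L : A)
    (h1 : L * mb - mb * L = c • ms)
    (h2 : L * m - m * L = -(c • mbs)) :
    (mb * mbs + mbs * mb) - (m * ms + ms * m)
      = c • (L * (m * mb + mb * m) - (m * mb + mb * m) * L) := by
  have hms : ms = (-c) • (L * mb - mb * L) := by
    rw [h1, smul_smul, neg_mul, hc, neg_neg, one_smul]
  have hmbs : mbs = (-c) • (m * L - L * m) := by
    have h3 : m * L - L * m = c • mbs := by rw [← neg_sub, h2, neg_neg]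
    rw [h3, smul_smul, neg_mul, hc, neg_neg, one_smul]
  subst hms hmbs
  simp only [mul_smul_comm, smul_mul_assoc, mul_add, add_mul, mul_sub, sub_mul,
    smul_sub, smul_add, smul_neg, neg_smul, neg_sub, neg_neg, neg_mul, mul_neg, mul_assoc]
  abel

/-- Intermediate identities in the proof of `Δ_∂̄ + Δ_μ = Δ_∂ + Δ_μ̄`
(item (2) of Proposition `AKDeltas`):
`Δ_μ̄ − Δ_μ = i[Λ, μμ̄ + μ̄μ]` and (likewise) `Δ_∂̄ − Δ_∂ = −i[Λ, ∂∂̄ + ∂̄∂]`. -/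
theorem stmt_12 {E : Type*} [AddCommGroup E] [Module ℂ E] :
    (∀ (mb m mbs ms Λ : E →ₗ[ℂ] E),
      Λ ∘ₗ mb - mb ∘ₗ Λ = Complex.I • ms →
      Λ ∘ₗ m - m ∘ₗ Λ = -(Complex.I • mbs) →
      (mb ∘ₗ mbs + mbs ∘ₗ mb) - (m ∘ₗ ms + ms ∘ₗ m)
        = Complex.I • (Λ ∘ₗ (m ∘ₗ mb + mb ∘ₗ m) - (m ∘ₗ mb + mb ∘ₗ m) ∘ₗ Λ)) ∧
    (∀ (pb p pbs ps Λ : E →ₗ[ℂ] E),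
      Λ ∘ₗ pb - pb ∘ₗ Λ = -(Complex.I • ps) →
      Λ ∘ₗ p - p ∘ₗ Λ = Complex.I • pbs →
      (pb ∘ₗ pbs + pbs ∘ₗ pb) - (p ∘ₗ ps + ps ∘ₗ p)
        = -(Complex.I • (Λ ∘ₗ (p ∘ₗ pb + pb ∘ₗ p) - (p ∘ₗ pb + pb ∘ₗ p) ∘ₗ Λ))) := by
  constructor
  · intro mb m mbs ms Λ h1 h2
    exact auxc (A := Module.End ℂ E) Complex.I (by simp [Complex.I_mul_I]) mb m mbs ms Λ h1 h2
  · intro pb p pbs ps Λ h1 h2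
    have := auxc (A := Module.End ℂ E) (-Complex.I) (by simp [Complex.I_mul_I])
      pb p pbs ps Λ (by rw [neg_smul]; exact h1) (by rw [neg_smul, neg_neg]; exact h2)
    rw [neg_smul] at this
    exact this
end
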